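/- Non-signalling adapters preserve causal order: Let Y be a non-signalling adapter and W a two-party process matrix on A_I ⊗ A_O ⊗ B_I ⊗ B_O, and set W' := Y ⋆ W (a matrix on A_I' ⊗ A_O' ⊗ B_I' ⊗ B_O'). If W is causally ordered B≺A, i.e., D_{A_O}(W) = W and D_{A_O A_I}(W) = D_{A_O A_I B_O}(W), then W' satisfies D_{A_O'}(W') = W' and D_{A_O' A_I'}(W') = D_{A_O' A_I' B_O'}(W'); likewise, if W is causally ordered A≺B, i.e., D_{B_O}(W) = W and D_{B_O B_I}(W) = D_{B_O B_I A_O}(W), then W' satisfies D_{B_O'}(W') = W' and D_{B_O' B_I'}(W') = D_{B_O' B_I' A_O'}(W'). -/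

import Mathlib

open scoped BigOperators ComplexOrder

/-- Trace-and-replace map `D_X` on the collection `S` of tensor factors:
`D_S(W) = (1/d_S) * (1_S ⊗ tr_S(W))`, written entrywise. -/
noncomputable def Dset {ι : Type} [Fintype ι] [DecidableEq ι] {F : ι → Type}
    [∀ i, Fintype (F i)] [∀ i, DecidableEq (F i)]
    (S : Finset ι) (M : Matrix ((i : ι) → F i) ((i : ι) → F i) ℂ) :
    Matrix ((i : ι) → F i) ((i : ι) → F i) ℂ :=
  fun p q =>
    ((if ∀ i ∈ S, p i = q i then (1 : ℂ) else 0) / ∏ i ∈ S, (Fintype.card (F i) : ℂ)) *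
      ((∑ r : (i : ι) → F i,
          M (fun i => if i ∈ S then r i else p i) (fun i => if i ∈ S then r i else q i)) /
        ∏ i ∈ Sᶜ, (Fintype.card (F i) : ℂ))

/-- Index of the two-party space `A_I ⊗ A_O ⊗ B_I ⊗ B_O`:
slot `0 = A_I`, `1 = A_O`, `2 = B_I`, `3 = B_O`, with dimensions `d i`. -/
abbrev PIdx (d : Fin 4 → ℕ) : Type := (i : Fin 4) → Fin (d i)

abbrev PMat (d : Fin 4 → ℕ) : Type := Matrix (PIdx d) (PIdx d) ℂ

/-- The projector `L_V` onto the subspace of valid two-party process matrices. -/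
noncomputable def LV {d : Fin 4 → ℕ} (W : PMat d) : PMat d :=
  Dset ({1} : Finset (Fin 4)) W + Dset ({3} : Finset (Fin 4)) W
    - Dset ({1, 3} : Finset (Fin 4)) W - Dset ({2, 3} : Finset (Fin 4)) W
    + Dset ({1, 2, 3} : Finset (Fin 4)) W - Dset ({0, 1} : Finset (Fin 4)) W
    + Dset ({0, 1, 3} : Finset (Fin 4)) W

/-- Two-party process matrix: positive semidefinite, `L_V(W) = W`,
and `tr W = d_{A_O} * d_{B_O}`. -/
def IsProc {d : Fin 4 → ℕ} (W : PMat d) : Prop :=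
  W.PosSemidef ∧ LV W = W ∧ W.trace = (d 1 : ℂ) * (d 3 : ℂ)

/-- Free (non-signalling) process matrix: a process matrix with `D_{A_O B_O}(W) = W`. -/
def IsFree {d : Fin 4 → ℕ} (W : PMat d) : Prop :=
  IsProc W ∧ Dset ({1, 3} : Finset (Fin 4)) W = W

/-- Signalling robustness. -/
noncomputable def Rs {d : Fin 4 → ℕ} (W : PMat d) : ℝ :=
  sInf { s : ℝ | 0 ≤ s ∧ ∃ T C : PMat d, IsProc T ∧ IsFree C ∧
    W + (s : ℂ) • T = ((1 + s : ℝ) : ℂ) • C }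

/-- Causal order `A ≺ B`: `D_{B_O}(W) = W` and `D_{B_O B_I}(W) = D_{B_O B_I A_O}(W)`. -/
def OrderedAB {d : Fin 4 → ℕ} (W : PMat d) : Prop :=
  Dset ({3} : Finset (Fin 4)) W = W ∧
    Dset ({2, 3} : Finset (Fin 4)) W = Dset ({1, 2, 3} : Finset (Fin 4)) W

/-- Causal order `B ≺ A`: `D_{A_O}(W) = W` and `D_{A_O A_I}(W) = D_{A_O A_I B_O}(W)`. -/
def OrderedBA {d : Fin 4 → ℕ} (W : PMat d) : Prop :=
  Dset ({1} : Finset (Fin 4)) W = W ∧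
    Dset ({0, 1} : Finset (Fin 4)) W = Dset ({0, 1, 3} : Finset (Fin 4)) W

/-- Index of the adapter space `(A_I ⊗ A_I') ⊗ (A_O ⊗ A_O') ⊗ (B_I ⊗ B_I') ⊗ (B_O ⊗ B_O')`:
`(i, false)` is the unprimed slot `i` (dimension `d i`), `(i, true)` the primed slot `i`
(dimension `e i`); the slot numbering `0 = A_I, 1 = A_O, 2 = B_I, 3 = B_O` is as before. -/
abbrev AdIdx (d e : Fin 4 → ℕ) : Type :=
  (x : Fin 4 × Bool) → Fin (cond x.2 (e x.1) (d x.1))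

/-- Combine a 4-tuple of unprimed indices with a 4-tuple of primed indices. -/
def comb2 {f g : Fin 4 → ℕ} (u : (i : Fin 4) → Fin (f i)) (v : (i : Fin 4) → Fin (g i)) :
    (x : Fin 4 × Bool) → Fin (cond x.2 (g x.1) (f x.1))
  | (i, false) => u i
  | (i, true) => v i

/-- The projector `L_A` on adapters:
`L_A(Y) = Y - D_{A_O}(Y) + D_{A_O A_O'}(Y) - D_{A_I' A_O A_O'}(Y) + D_{A_I A_I' A_O A_O'}(Y)`. -/
noncomputable def LAad {d e : Fin 4 → ℕ} (Y : Matrix (AdIdx d e) (AdIdx d e) ℂ) :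
    Matrix (AdIdx d e) (AdIdx d e) ℂ :=
  Y - Dset ({(1, false)} : Finset (Fin 4 × Bool)) Y
    + Dset ({(1, false), (1, true)} : Finset (Fin 4 × Bool)) Y
    - Dset ({(0, true), (1, false), (1, true)} : Finset (Fin 4 × Bool)) Y
    + Dset ({(0, false), (0, true), (1, false), (1, true)} : Finset (Fin 4 × Bool)) Y

/-- The projector `L_B` on adapters:
`L_B(Y) = Y - D_{B_O}(Y) + D_{B_O B_O'}(Y) - D_{B_I' B_O B_O'}(Y) + D_{B_I B_I' B_O B_O'}(Y)`. -/
noncomputable def LBad {d e : Fin 4 → ℕ} (Y : Matrix (AdIdx d e) (AdIdx d e) ℂ) :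
    Matrix (AdIdx d e) (AdIdx d e) ℂ :=
  Y - Dset ({(3, false)} : Finset (Fin 4 × Bool)) Y
    + Dset ({(3, false), (3, true)} : Finset (Fin 4 × Bool)) Y
    - Dset ({(2, true), (3, false), (3, true)} : Finset (Fin 4 × Bool)) Y
    + Dset ({(2, false), (2, true), (3, false), (3, true)} : Finset (Fin 4 × Bool)) Y

/-- Non-signalling adapter: positive semidefinite, `L_A(L_B(Y)) = Y`, and
`tr(Y) = d_{A_I} * d_{B_I} * d_{A_O'} * d_{B_O'}`. -/
def IsNSAdapter {d e : Fin 4 → ℕ} (Y : Matrix (AdIdx d e) (AdIdx d e) ℂ) : Prop :=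
  Y.PosSemidef ∧ LAad (LBad Y) = Y ∧
    Y.trace = (d 0 : ℂ) * (d 2 : ℂ) * (e 1 : ℂ) * (e 3 : ℂ)

/-- The link-product action of an adapter on a matrix on the unprimed two-party space:
`Y ⋆ W = tr_{A_I A_O B_I B_O}[Y * (W^T ⊗ 1_{A_I' A_O' B_I' B_O'})]`, written entrywise. -/
noncomputable def adAct {d e : Fin 4 → ℕ} (Y : Matrix (AdIdx d e) (AdIdx d e) ℂ)
    (W : PMat d) : PMat e :=
  fun p q => ∑ u : PIdx d, ∑ v : PIdx d, Y (comb2 u p) (comb2 v q) * W u v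

/-!
The maps `D_S` are commuting idempotents, `D_S ∘ D_T = D_{S ∪ T}`, and under the link product a
trace-and-replace on the adapter moves to one of its sides: on primed factors it becomes
`D` on `Y ⋆ W`, on unprimed factors it becomes `D` on `W` (`D_S` is self-adjoint for the pairing
`∑ A_{uv} B_{uv}`). Hence, if `D_{A_O} W = W` and `Y = L_A Y'`, expanding `L_A` gives
`Y ⋆ W = D_{A_O'} X - D_{A_I' A_O'} X + D_{A_I' A_O'} (Y' ⋆ D_{A_I A_O} W)` with `X = Y' ⋆ W`,
which is `D_{A_O'}`-invariant and has
`D_{A_I' A_O'} (Y ⋆ W) = D_{A_I' A_O'} (Y' ⋆ D_{A_I A_O} W)`.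
For `B ≺ A` the matrix `D_{A_I A_O} W` is `D_{B_O}`-invariant, so the same argument for `B`
with `Y' = L_B Y` shows that `D_{B_O'}` fixes `Y' ⋆ D_{A_I A_O} W`, which is the second condition.
The case `A ≺ B` is symmetric because `L_A` and `L_B` commute.
-/

lemma prod_card_ne_zero {ι : Type} [Fintype ι] {F : ι → Type} [∀ i, Fintype (F i)]
    (u : (i : ι) → F i) : ∏ i, (Fintype.card (F i) : ℂ) ≠ 0 :=
  Finset.prod_ne_zero_iff.mpr fun i _ =>
    Nat.cast_ne_zero.mpr (@Fintype.card_ne_zero _ _ ⟨u i⟩)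

lemma piecewise_piecewise_eq_union {ι : Type} [DecidableEq ι] {F : ι → Type}
    (S T : Finset ι) (s r p : (i : ι) → F i) :
    T.piecewise s (S.piecewise r p) = (S ∪ T).piecewise (T.piecewise s r) p := by
  ext i
  by_cases hT : i ∈ T <;> by_cases hS : i ∈ S <;> simp [hT, hS]

-- `[Fintype ι]` makes the `Decidable` instances of the `if`s those used in `Dset`.
lemma ite_forall_mul_ite_forall {ι : Type} [Fintype ι] [DecidableEq ι] {F : ι → Type}
    [∀ i, DecidableEq (F i)] (S T : Finset ι) (p q : (i : ι) → F i) :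
    (if ∀ i ∈ S, p i = q i then (1 : ℂ) else 0)
        * (if ∀ i ∈ T, i ∈ S ∨ p i = q i then 1 else 0)
      = if ∀ i ∈ S ∪ T, p i = q i then 1 else 0 := by
  rw [ite_zero_mul_ite_zero, one_mul]
  refine if_congr ⟨fun ⟨hS, hT⟩ i hi => ?_, fun h => ⟨?_, ?_⟩⟩ rfl rfl
  · rcases Finset.mem_union.mp hi with hi | hi
    · exact hS i hi
    · exact (hT i hi).elim (hS i) id
  · exact fun i hi => h i (Finset.mem_union_left _ hi)
  · exact fun i hi => Or.inr (h i (Finset.mem_union_right _ hi))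

section TraceReplace

variable {ι : Type} [Fintype ι] [DecidableEq ι] {F : ι → Type} [∀ i, Fintype (F i)]

lemma sum_sum_piecewise (T : Finset ι) (g : ((i : ι) → F i) → ℂ) :
    ∑ r, ∑ s, g (T.piecewise s r) = (∏ i, (Fintype.card (F i) : ℂ)) * ∑ t, g t := by
  have hinv : Function.Involutive fun x : ((i : ι) → F i) × ((i : ι) → F i) =>
      (T.piecewise x.2 x.1, T.piecewise x.1 x.2) := by
    intro x
    refine Prod.ext (funext fun i => ?_) (funext fun i => ?_) <;>
      by_cases hi : i ∈ T <;> simp [hi]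
  calc ∑ r, ∑ s, g (T.piecewise s r)
      = ∑ x : ((i : ι) → F i) × ((i : ι) → F i), g (T.piecewise x.2 x.1) :=
        (Fintype.sum_prod_type fun x => g (T.piecewise x.2 x.1)).symm
    _ = ∑ x : ((i : ι) → F i) × ((i : ι) → F i), g x.1 :=
        Fintype.sum_bijective _ hinv.bijective (fun x => g (T.piecewise x.2 x.1)) (fun x => g x.1)
          fun _ => rfl
    _ = (∏ i, (Fintype.card (F i) : ℂ)) * ∑ t, g t := by
        rw [Fintype.sum_prod_type, Finset.mul_sum]
        simp [Fintype.card_pi]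

variable [∀ i, DecidableEq (F i)]

lemma Dset_apply (S : Finset ι) (M : Matrix ((i : ι) → F i) ((i : ι) → F i) ℂ)
    (p q : (i : ι) → F i) :
    Dset S M p q = (if ∀ i ∈ S, p i = q i then (1 : ℂ) else 0)
        * (∑ r, M (S.piecewise r p) (S.piecewise r q)) / ∏ i, (Fintype.card (F i) : ℂ) := by
  rw [← Finset.prod_mul_prod_compl S, ← div_mul_div_comm]
  rfl

lemma Dset_add (S : Finset ι) (M N : Matrix ((i : ι) → F i) ((i : ι) → F i) ℂ) :
    Dset S (M + N) = Dset S M + Dset S N := by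
  ext p q
  simp only [Dset_apply, Matrix.add_apply, Finset.sum_add_distrib]
  ring

lemma Dset_smul (S : Finset ι) (c : ℂ) (M : Matrix ((i : ι) → F i) ((i : ι) → F i) ℂ) :
    Dset S (c • M) = c • Dset S M := by
  ext p q
  simp only [Dset_apply, Matrix.smul_apply, smul_eq_mul, ← Finset.mul_sum]
  ring

noncomputable def DsetLinearMap (S : Finset ι) :
    Matrix ((i : ι) → F i) ((i : ι) → F i) ℂ →ₗ[ℂ]
      Matrix ((i : ι) → F i) ((i : ι) → F i) ℂ where
  toFun := Dset S
  map_add' := Dset_add S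
  map_smul' := Dset_smul S

lemma Dset_sub (S : Finset ι) (M N : Matrix ((i : ι) → F i) ((i : ι) → F i) ℂ) :
    Dset S (M - N) = Dset S M - Dset S N :=
  map_sub (DsetLinearMap S) M N

lemma Dset_Dset (S T : Finset ι) (M : Matrix ((i : ι) → F i) ((i : ι) → F i) ℂ) :
    Dset S (Dset T M) = Dset (S ∪ T) M := by
  rcases isEmpty_or_nonempty ((i : ι) → F i) with hE | ⟨⟨u⟩⟩
  · ext p; exact isEmptyElim p
  ext p q
  have hinner : ∀ r, Dset T M (S.piecewise r p) (S.piecewise r q)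
      = (if ∀ i ∈ T, i ∈ S ∨ p i = q i then (1 : ℂ) else 0)
        * (∑ s, M ((S ∪ T).piecewise (T.piecewise s r) p)
            ((S ∪ T).piecewise (T.piecewise s r) q))
        / ∏ i, (Fintype.card (F i) : ℂ) := by
    intro r
    rw [Dset_apply]
    simp only [piecewise_piecewise_eq_union]
    congr 2
    refine if_congr (forall₂_congr fun i _ => ?_) rfl rfl
    by_cases hS : i ∈ S <;> simp [hS]
  rw [Dset_apply, Dset_apply]
  simp only [hinner, ← Finset.sum_div, ← Finset.mul_sum,
    sum_sum_piecewise T (fun t => M ((S ∪ T).piecewise t p) ((S ∪ T).piecewise t q))]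
  rw [← ite_forall_mul_ite_forall]
  field_simp [prod_card_ne_zero u]

lemma Dset_comm (S T : Finset ι) (M : Matrix ((i : ι) → F i) ((i : ι) → F i) ℂ) :
    Dset S (Dset T M) = Dset T (Dset S M) := by
  rw [Dset_Dset, Dset_Dset, Finset.union_comm]

lemma sum_Dset_mul_eq_sum_filter (S : Finset ι)
    (A B : Matrix ((i : ι) → F i) ((i : ι) → F i) ℂ) :
    ∑ u, ∑ v, Dset S A u v * B u v
      = (∑ x ∈ Finset.univ.filter
            (fun x : (((i : ι) → F i) × ((i : ι) → F i)) × ((i : ι) → F i) =>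
              ∀ i ∈ S, x.1.1 i = x.1.2 i),
          A (S.piecewise x.2 x.1.1) (S.piecewise x.2 x.1.2) * B x.1.1 x.1.2)
        / ∏ i, (Fintype.card (F i) : ℂ) := by
  rw [Finset.sum_filter, Fintype.sum_prod_type, Fintype.sum_prod_type, Finset.sum_div]
  refine Finset.sum_congr rfl fun u _ => ?_
  rw [Finset.sum_div]
  refine Finset.sum_congr rfl fun v _ => ?_
  rw [Dset_apply]
  split_ifs <;> simp [Finset.sum_mul, Finset.sum_div, div_mul_eq_mul_div]

lemma sum_Dset_mul_eq_sum_mul_Dset (S : Finset ι)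
    (A B : Matrix ((i : ι) → F i) ((i : ι) → F i) ℂ) :
    ∑ u, ∑ v, Dset S A u v * B u v = ∑ u, ∑ v, A u v * Dset S B u v := by
  simp only [mul_comm (A _ _)]
  rw [sum_Dset_mul_eq_sum_filter, sum_Dset_mul_eq_sum_filter]
  congr 1
  set T := Finset.univ.filter
    fun x : (((i : ι) → F i) × ((i : ι) → F i)) × ((i : ι) → F i) => ∀ i ∈ S, x.1.1 i = x.1.2 i
  -- exchanging the common `S`-part of `u, v` with the `S`-part of `r` is an involution of `T`
  let φ (x : (((i : ι) → F i) × ((i : ι) → F i)) × ((i : ι) → F i)) :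
      (((i : ι) → F i) × ((i : ι) → F i)) × ((i : ι) → F i) :=
    ((S.piecewise x.2 x.1.1, S.piecewise x.2 x.1.2), S.piecewise x.1.1 x.2)
  have hφT : ∀ x ∈ T, φ x ∈ T := by
    intro x _
    simp +contextual [T, φ]
  have hφφ : ∀ x ∈ T, φ (φ x) = x := by
    intro x hx
    have hagree := (Finset.mem_filter.mp hx).2
    refine Prod.ext (Prod.ext (funext fun i => ?_) (funext fun i => ?_)) (funext fun i => ?_) <;>
      by_cases hi : i ∈ S <;> simp [φ, hi, hagree i]
  refine Finset.sum_nbij' φ φ hφT hφT hφφ hφφ fun x hx => ?_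
  rw [mul_comm]
  congr 2
  · exact congrArg (fun y => y.1.1) (hφφ x hx).symm
  · exact congrArg (fun y => y.1.2) (hφφ x hx).symm

end TraceReplace

section Adapter

variable {d e : Fin 4 → ℕ}

@[simp]
lemma comb2_apply_false {f g : Fin 4 → ℕ} (u : (i : Fin 4) → Fin (f i))
    (v : (i : Fin 4) → Fin (g i)) (i : Fin 4) : comb2 u v (i, false) = u i := rfl

@[simp]
lemma comb2_apply_true {f g : Fin 4 → ℕ} (u : (i : Fin 4) → Fin (f i))
    (v : (i : Fin 4) → Fin (g i)) (i : Fin 4) : comb2 u v (i, true) = v i := rfl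

def adIdxEquiv (d e : Fin 4 → ℕ) : PIdx d × PIdx e ≃ AdIdx d e where
  toFun x := comb2 x.1 x.2
  invFun R := (fun i => R (i, false), fun i => R (i, true))
  left_inv _ := rfl
  right_inv R := by
    funext ⟨i, b⟩
    cases b <;> rfl

lemma sum_adIdx (g : AdIdx d e → ℂ) :
    ∑ R, g R = ∑ u : PIdx d, ∑ r : PIdx e, g (comb2 u r) := by
  rw [← (adIdxEquiv d e).sum_comp, Fintype.sum_prod_type]
  rfl

lemma prod_card_adIdx :
    ∏ x : Fin 4 × Bool, (Fintype.card (Fin (cond x.2 (e x.1) (d x.1))) : ℂ)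
      = (∏ i, (Fintype.card (Fin (d i)) : ℂ)) * ∏ i, (Fintype.card (Fin (e i)) : ℂ) := by
  rw [Fintype.prod_prod_type, ← Finset.prod_mul_distrib]
  exact Finset.prod_congr rfl fun i _ => by rw [Fintype.prod_bool, mul_comm]; rfl

lemma piecewise_image_true_comb2 (S : Finset (Fin 4)) (R : AdIdx d e) (u : PIdx d) (p : PIdx e) :
    (S.image (·, true)).piecewise R (comb2 u p)
      = comb2 u (S.piecewise (fun i => R (i, true)) p) := by
  funext ⟨i, b⟩
  cases b <;> by_cases hi : i ∈ S <;> simp [Finset.piecewise, hi]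

lemma piecewise_image_false_comb2 (S : Finset (Fin 4)) (R : AdIdx d e) (u : PIdx d) (p : PIdx e) :
    (S.image (·, false)).piecewise R (comb2 u p)
      = comb2 (S.piecewise (fun i => R (i, false)) u) p := by
  funext ⟨i, b⟩
  cases b <;> by_cases hi : i ∈ S <;> simp [Finset.piecewise, hi]

lemma Dset_image_true_comb2 (S : Finset (Fin 4)) (Y : Matrix (AdIdx d e) (AdIdx d e) ℂ)
    (u v : PIdx d) (p q : PIdx e) :
    Dset (S.image (·, true)) Y (comb2 u p) (comb2 v q)
      = Dset S (Matrix.of fun p q => Y (comb2 u p) (comb2 v q) : PMat e) p q := by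
  rw [Dset_apply, Dset_apply, prod_card_adIdx, sum_adIdx]
  simp only [piecewise_image_true_comb2, comb2_apply_true, Finset.forall_mem_image,
    Finset.sum_const, Finset.card_univ, nsmul_eq_mul, Matrix.of_apply]
  rw [Fintype.card_pi, Nat.cast_prod, mul_left_comm, mul_div_mul_left _ _ (prod_card_ne_zero u)]
  -- the two `if`s differ only in their `Decidable` instances
  congr 3

lemma Dset_image_false_comb2 (S : Finset (Fin 4)) (Y : Matrix (AdIdx d e) (AdIdx d e) ℂ)
    (u v : PIdx d) (p q : PIdx e) :
    Dset (S.image (·, false)) Y (comb2 u p) (comb2 v q)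
      = Dset S (Matrix.of fun u v => Y (comb2 u p) (comb2 v q) : PMat d) u v := by
  rw [Dset_apply, Dset_apply, prod_card_adIdx, sum_adIdx]
  simp only [piecewise_image_false_comb2, comb2_apply_false, Finset.forall_mem_image,
    Finset.sum_const, Finset.card_univ, nsmul_eq_mul, Matrix.of_apply]
  rw [← Finset.mul_sum, Fintype.card_pi, Nat.cast_prod, mul_left_comm, mul_comm (∏ i, _ : ℂ),
    mul_div_mul_right _ _ (prod_card_ne_zero p)]
  congr 3


lemma adAct_add (Y Y' : Matrix (AdIdx d e) (AdIdx d e) ℂ) (W : PMat d) :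
    adAct (Y + Y') W = adAct Y W + adAct Y' W := by
  ext p q
  simp only [adAct, Matrix.add_apply, add_mul, Finset.sum_add_distrib]

lemma adAct_sub (Y Y' : Matrix (AdIdx d e) (AdIdx d e) ℂ) (W : PMat d) :
    adAct (Y - Y') W = adAct Y W - adAct Y' W := by
  ext p q
  simp only [adAct, Matrix.sub_apply, sub_mul, Finset.sum_sub_distrib]

lemma adAct_eq_sum_smul (Y : Matrix (AdIdx d e) (AdIdx d e) ℂ) (W : PMat d) :
    adAct Y W
      = ∑ u, ∑ v, W u v • (Matrix.of fun p q => Y (comb2 u p) (comb2 v q) : PMat e) := by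
  ext p q
  simp only [adAct, Matrix.sum_apply, Matrix.smul_apply, Matrix.of_apply, smul_eq_mul, mul_comm]

lemma adAct_Dset_image_true (S : Finset (Fin 4)) (Y : Matrix (AdIdx d e) (AdIdx d e) ℂ)
    (W : PMat d) : adAct (Dset (S.image (·, true)) Y) W = Dset S (adAct Y W) := by
  rw [adAct_eq_sum_smul, adAct_eq_sum_smul]
  change _ = DsetLinearMap S _
  simp only [map_sum, map_smul]
  refine Finset.sum_congr rfl fun u _ => Finset.sum_congr rfl fun v _ => ?_
  congr 1
  ext p q
  exact Dset_image_true_comb2 S Y u v p q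

lemma adAct_Dset_image_false (S : Finset (Fin 4)) (Y : Matrix (AdIdx d e) (AdIdx d e) ℂ)
    (W : PMat d) : adAct (Dset (S.image (·, false)) Y) W = adAct Y (Dset S W) := by
  ext p q
  simp only [adAct, Dset_image_false_comb2]
  exact sum_Dset_mul_eq_sum_mul_Dset S _ W

lemma adAct_Dset_image_union (S T : Finset (Fin 4)) (Y : Matrix (AdIdx d e) (AdIdx d e) ℂ)
    (W : PMat d) :
    adAct (Dset (T.image (·, false) ∪ S.image (·, true)) Y) W
      = Dset S (adAct Y (Dset T W)) := by
  rw [Finset.union_comm, ← Dset_Dset, adAct_Dset_image_true, adAct_Dset_image_false]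


/-- `LAad = adapterProj 0 1` and `LBad = adapterProj 2 3`. -/
noncomputable def adapterProj (i o : Fin 4) (Y : Matrix (AdIdx d e) (AdIdx d e) ℂ) :
    Matrix (AdIdx d e) (AdIdx d e) ℂ :=
  Y - Dset {(o, false)} Y + Dset {(o, false), (o, true)} Y
    - Dset {(i, true), (o, false), (o, true)} Y
    + Dset {(i, false), (i, true), (o, false), (o, true)} Y

lemma adapterProj_comm (i o i' o' : Fin 4) (Y : Matrix (AdIdx d e) (AdIdx d e) ℂ) :
    adapterProj i o (adapterProj i' o' Y) = adapterProj i' o' (adapterProj i o Y) := by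
  simp only [adapterProj, Dset_sub, Dset_add, Dset_Dset, Finset.union_comm]
  abel

lemma adAct_adapterProj (i o : Fin 4) (Y : Matrix (AdIdx d e) (AdIdx d e) ℂ) {V : PMat d}
    (hV : Dset {o} V = V) :
    adAct (adapterProj i o Y) V
      = Dset {o} (adAct Y V) - Dset {i, o} (adAct Y V) + Dset {i, o} (adAct Y (Dset {i, o} V)) := by
  have h₁ : ({(o, false)} : Finset (Fin 4 × Bool))
      = ({o} : Finset (Fin 4)).image (·, false) := by
    simp
  have h₂ : ({(o, false), (o, true)} : Finset (Fin 4 × Bool))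
      = ({o} : Finset (Fin 4)).image (·, false) ∪ ({o} : Finset (Fin 4)).image (·, true) := by
    ext ⟨j, _ | _⟩ <;> simp
  have h₃ : ({(i, true), (o, false), (o, true)} : Finset (Fin 4 × Bool))
      = ({o} : Finset (Fin 4)).image (·, false)
        ∪ ({i, o} : Finset (Fin 4)).image (·, true) := by
    ext ⟨j, _ | _⟩ <;> simp
  have h₄ : ({(i, false), (i, true), (o, false), (o, true)} : Finset (Fin 4 × Bool))
      = ({i, o} : Finset (Fin 4)).image (·, false)
        ∪ ({i, o} : Finset (Fin 4)).image (·, true) := by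
    ext ⟨j, _ | _⟩ <;> simp
  rw [adapterProj, adAct_add, adAct_sub, adAct_add, adAct_sub, h₄, h₃, h₂, h₁,
    adAct_Dset_image_false, adAct_Dset_image_union, adAct_Dset_image_union,
    adAct_Dset_image_union, hV]
  abel

lemma Dset_adAct_adapterProj_out (i o : Fin 4) (Y : Matrix (AdIdx d e) (AdIdx d e) ℂ) {V : PMat d}
    (hV : Dset {o} V = V) :
    Dset {o} (adAct (adapterProj i o Y) V) = adAct (adapterProj i o Y) V := by
  have hsub : ({o} ∪ {i, o} : Finset (Fin 4)) = {i, o} := Finset.union_eq_right.mpr (by simp)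
  rw [adAct_adapterProj i o Y hV, Dset_add, Dset_sub]
  simp only [Dset_Dset, Finset.union_self, hsub]

lemma Dset_adAct_adapterProj_party (i o : Fin 4) (Y : Matrix (AdIdx d e) (AdIdx d e) ℂ)
    {V : PMat d} (hV : Dset {o} V = V) :
    Dset {i, o} (adAct (adapterProj i o Y) V) = Dset {i, o} (adAct Y (Dset {i, o} V)) := by
  have hsub : ({i, o} ∪ {o} : Finset (Fin 4)) = {i, o} := Finset.union_eq_left.mpr (by simp)
  rw [adAct_adapterProj i o Y hV, Dset_add, Dset_sub]
  simp only [Dset_Dset, Finset.union_self, hsub, sub_self, zero_add]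

-- For `(i, o, i', o') = (0, 1, 2, 3)` the hypotheses on `W` say `B ≺ A`, for `(2, 3, 0, 1)`
-- they say `A ≺ B`.
lemma adAct_preserves_order {i o i' o' : Fin 4} {Y : Matrix (AdIdx d e) (AdIdx d e) ℂ}
    (hY : adapterProj i o (adapterProj i' o' Y) = Y) {W : PMat d}
    (h_out : Dset {o} W = W) (h_party : Dset {i, o} W = Dset {i, o, o'} W) :
    Dset {o} (adAct Y W) = adAct Y W ∧ Dset {i, o} (adAct Y W) = Dset {i, o, o'} (adAct Y W) := by
  have hset : ({o'} ∪ {i, o} : Finset (Fin 4)) = {i, o, o'} := by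
    ext j; simp only [Finset.mem_union, Finset.mem_insert, Finset.mem_singleton]; tauto
  -- `D_{i o} W` is invariant under `D_{o'}`, so the identity for the party `(i', o')` applies to it
  have hV : Dset {o'} (Dset {i, o} W) = Dset {i, o} W := by rw [Dset_Dset, hset, h_party]
  rw [← hY]
  refine ⟨Dset_adAct_adapterProj_out i o _ h_out, ?_⟩
  calc Dset {i, o} (adAct (adapterProj i o (adapterProj i' o' Y)) W)
      = Dset {i, o} (adAct (adapterProj i' o' Y) (Dset {i, o} W)) :=
        Dset_adAct_adapterProj_party i o _ h_out
    _ = Dset {o'} (Dset {i, o} (adAct (adapterProj i' o' Y) (Dset {i, o} W))) := by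
        rw [Dset_comm, Dset_adAct_adapterProj_out i' o' Y hV]
    _ = Dset {i, o, o'} (adAct (adapterProj i o (adapterProj i' o' Y)) W) := by
        rw [← Dset_adAct_adapterProj_party i o _ h_out, Dset_Dset, hset]

end Adapter

theorem ns_adapters_preserve_order_general {d e : Fin 4 → ℕ}
    (Y : Matrix (AdIdx d e) (AdIdx d e) ℂ) (hY : IsNSAdapter Y)
    (W : PMat d) :
    (OrderedBA W → OrderedBA (adAct Y W)) ∧ (OrderedAB W → OrderedAB (adAct Y W)) := by
  obtain ⟨-, hLL, -⟩ := hY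
  have hBA : adapterProj 0 1 (adapterProj 2 3 Y) = Y := hLL
  have hAB : adapterProj 2 3 (adapterProj 0 1 Y) = Y := by rw [adapterProj_comm]; exact hLL
  have hset : ({2, 3, 1} : Finset (Fin 4)) = {1, 2, 3} := by decide
  refine ⟨fun ⟨h_out, h_party⟩ => adAct_preserves_order hBA h_out h_party,
    fun ⟨h_out, h_party⟩ => ?_⟩
  rw [← hset] at h_party
  simpa only [OrderedAB, hset] using adAct_preserves_order hAB h_out h_party

/-- Non-signalling adapters preserve causal order. -/
theorem ns_adapters_preserve_order {d e : Fin 4 → ℕ} (hd : ∀ i, 0 < d i) (he : ∀ i, 0 < e i)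
    (Y : Matrix (AdIdx d e) (AdIdx d e) ℂ) (hY : IsNSAdapter Y)
    (W : PMat d) (hW : IsProc W) :
    (OrderedBA W → OrderedBA (adAct Y W)) ∧ (OrderedAB W → OrderedAB (adAct Y W)) :=
  ns_adapters_preserve_order_general Y hY W
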